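/- A finite simple graph G is a split graph if and only if its nonincreasing degree sequence d = (d_1,...,d_n) satisfies Σ_{i=1}^m d_i = m(m−1) + Σ_{i=m+1}^n d_i, where m = m(d) = max{i : d_i ≥ i−1}. -/

import Mathlib

open SimpleGraph Finset

/-- `s` is an independent set in `G`. -/
def IsIndepSet {α : Type*} (G : SimpleGraph α) (s : Set α) : Prop :=
  s.Pairwise fun a b => ¬ G.Adj a b

/-- `(G, A, B)` is a splitted graph: `A` an independent set and `B` a clique
partitioning the vertex set of `G`. -/
def IsSplitted {α : Type*} (G : SimpleGraph α) (A B : Set α) : Prop :=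
  _root_.IsIndepSet G A ∧ G.IsClique B ∧ A ∪ B = Set.univ ∧ Disjoint A B

/-- `G` is a split graph. -/
def IsSplitGraph {α : Type*} (G : SimpleGraph α) : Prop :=
  ∃ A B : Set α, IsSplitted G A B

/-- Tyshkevich composition `(G, A, B) ∘ H`: the disjoint union of `G` and `H`
together with all edges between the clique `B` and the vertices of `H`. -/
def comp {α β : Type*} (G : SimpleGraph α) (B : Set α) (H : SimpleGraph β) :
    SimpleGraph (α ⊕ β) where
  Adj x y :=
    match x, y with
    | Sum.inl a, Sum.inl a' => G.Adj a a'
    | Sum.inr b, Sum.inr b' => H.Adj b b'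
    | Sum.inl a, Sum.inr _ => a ∈ B
    | Sum.inr _, Sum.inl a => a ∈ B
  symm := by
    constructor
    rintro (a | b) (a' | b') h
    · exact G.symm.symm _ _ h
    · exact h
    · exact h
    · exact H.symm.symm _ _ h
  loopless := by
    constructor
    rintro (a | b) h
    · exact G.loopless.irrefl a h
    · exact H.loopless.irrefl b h

/-- The degree of a vertex, as the cardinality of its neighborhood. -/
noncomputable def deg {α : Type*} (G : SimpleGraph α) (v : α) : ℕ :=
  (G.neighborSet v).ncard

/-- The disjoint union of two edges. -/
def twoK2 : SimpleGraph (Fin 4) :=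
  SimpleGraph.fromRel fun a b => (a.val = 0 ∧ b.val = 1) ∨ (a.val = 2 ∧ b.val = 3)

/-- The 4-cycle. -/
def cycle4 : SimpleGraph (Fin 4) :=
  SimpleGraph.fromRel fun a b =>
    (a.val = 0 ∧ b.val = 1) ∨ (a.val = 1 ∧ b.val = 2) ∨
    (a.val = 2 ∧ b.val = 3) ∨ (a.val = 3 ∧ b.val = 0)

/-- The path on four vertices. -/
def path4 : SimpleGraph (Fin 4) :=
  SimpleGraph.fromRel fun a b =>
    (a.val = 0 ∧ b.val = 1) ∨ (a.val = 1 ∧ b.val = 2) ∨ (a.val = 2 ∧ b.val = 3)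

/-- The 5-cycle. -/
def cycle5 : SimpleGraph (Fin 5) :=
  SimpleGraph.fromRel fun a b =>
    (a.val = 0 ∧ b.val = 1) ∨ (a.val = 1 ∧ b.val = 2) ∨
    (a.val = 2 ∧ b.val = 3) ∨ (a.val = 3 ∧ b.val = 4) ∨ (a.val = 4 ∧ b.val = 0)

/-!
Choose a split partition whose clique `B` is as large as possible. Then every vertex of `B` has
degree at least `|B| - 1`, and every vertex outside has degree at most `|B| - 1` (otherwise it is
adjacent to all of `B` and can be moved into the clique). Hence `m(d) = |B|` and the first `m`
terms of `d` add up to the degrees of `B`. Splitting each degree sum into edges inside and across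
the two parts, the identity `Σ_{i ≤ m} d_i = m(m-1) + Σ_{i > m} d_i` for a set `S` of `m`
vertices says `2 e(S) = m(m-1) + 2 e(Sᶜ)`; since `2 e(S) ≤ m(m-1)`, this holds exactly when `S`
is a clique and `Sᶜ` is independent.
-/

theorem Finset.sum_le_sum_of_card_eq {ι M : Type*} [DecidableEq ι] [AddCommMonoid M]
    [LinearOrder M] [IsOrderedAddMonoid M] {s t : Finset ι} {f : ι → M} (hst : #s = #t)
    (h : ∀ x ∈ s \ t, ∀ y ∈ t \ s, f x ≤ f y) : ∑ x ∈ s, f x ≤ ∑ x ∈ t, f x := by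
  rw [← sum_inter_add_sum_sdiff s t, ← sum_inter_add_sum_sdiff t s, inter_comm]
  refine add_le_add_right ?_ _
  obtain hst' | ⟨x, hx, hmax⟩ := (s \ t).eq_empty_or_nonempty.imp_right (exists_max_image _ f)
  · rw [hst', card_eq_zero.mp ((card_sdiff_comm hst).symm.trans (by rw [hst', card_empty]))]
  · calc ∑ x ∈ s \ t, f x ≤ #(s \ t) • f x := sum_le_card_nsmul _ _ _ hmax
      _ = #(t \ s) • f x := by rw [card_sdiff_comm hst]
      _ ≤ ∑ y ∈ t \ s, f y := card_nsmul_le_sum _ _ _ (h x hx)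

theorem Fin.card_filter_val_lt_of_le {n m : ℕ} (h : m ≤ n) :
    #(univ.filter fun i : Fin n => (i : ℕ) < m) = m := by
  rw [Fin.card_filter_val_lt, min_eq_right h]

section AntitoneSequence

variable {n : ℕ}

theorem Antitone.sum_filter_val_lt_card_eq {M : Type*} [AddCommMonoid M] [LinearOrder M]
    [IsOrderedAddMonoid M] {d : Fin n → M} (hd : Antitone d) {B : Finset (Fin n)}
    (hB : ∀ x ∉ B, ∀ y ∈ B, d x ≤ d y) :
    ∑ i ∈ univ.filter (fun i : Fin n => (i : ℕ) < #B), d i = ∑ i ∈ B, d i := by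
  have hcard := Fin.card_filter_val_lt_of_le (card_le_univ B |>.trans_eq (Fintype.card_fin n))
  refine le_antisymm (sum_le_sum_of_card_eq hcard fun x hx y hy => ?_)
    (sum_le_sum_of_card_eq hcard.symm fun x hx y hy => hd ?_)
  · exact hB x (mem_sdiff.mp hx).2 y (mem_sdiff.mp hy).1
  · simp only [mem_sdiff, mem_filter, mem_univ, true_and, not_lt] at hx hy
    exact Fin.le_def.mpr (hy.1.le.trans hx.2)

/-- The paper's `m(d) = max {i : d_i ≥ i - 1}` for 1-based `d_1, …, d_n`; here `d` is 0-based,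
so `i` is `j + 1` with `j ≤ d j`, and the maximum of the empty set is `0`. -/
def splitIndex (d : Fin n → ℕ) : ℕ :=
  (univ.filter fun j : Fin n => (j : ℕ) ≤ d j).sup fun j => (j : ℕ) + 1

theorem splitIndex_le (d : Fin n → ℕ) : splitIndex d ≤ n :=
  Finset.sup_le fun j _ => j.isLt

theorem splitIndex_eq_of_forall_le_apply_iff {k : ℕ} {d : Fin n → ℕ} (hk : k ≤ n)
    (h : ∀ j : Fin n, (j : ℕ) ≤ d j ↔ (j : ℕ) < k) : splitIndex d = k := by
  refine le_antisymm (Finset.sup_le fun j hj => (h j).mp (mem_filter.mp hj).2) ?_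
  cases k with
  | zero => exact Nat.zero_le _
  | succ k =>
    exact le_sup (f := fun j : Fin n => (j : ℕ) + 1) (b := ⟨k, hk⟩)
      (mem_filter.mpr ⟨mem_univ _, (h ⟨k, hk⟩).mpr k.lt_add_one⟩)

theorem Antitone.le_apply_iff_lt_card {d : Fin n → ℕ} (hd : Antitone d) {B : Finset (Fin n)}
    (hB : ∀ v ∈ B, #B ≤ d v + 1) (hBc : ∀ v ∉ B, d v < #B) (j : Fin n) :
    (j : ℕ) ≤ d j ↔ (j : ℕ) < #B := by
  constructor
  · intro hj
    by_contra! hBj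
    obtain ⟨i, hij, hiB⟩ := exists_mem_notMem_of_card_lt_card (s := B) (t := Iic j)
      (by rw [Fin.card_Iic]; omega)
    have := hd (mem_Iic.mp hij)
    have := hBc i hiB
    omega
  · intro hj
    obtain ⟨b, hbB, hjb⟩ := exists_mem_notMem_of_card_lt_card (s := Iio j) (t := B)
      (by rwa [Fin.card_Iio])
    have := hd (not_lt.mp (mem_Iio.not.mp hjb))
    have := hB b hbB
    omega

theorem Antitone.splitIndex_eq_card {d : Fin n → ℕ} (hd : Antitone d) {B : Finset (Fin n)}
    (hB : ∀ v ∈ B, #B ≤ d v + 1) (hBc : ∀ v ∉ B, d v < #B) : splitIndex d = #B :=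
  splitIndex_eq_of_forall_le_apply_iff (card_le_univ B |>.trans_eq (Fintype.card_fin n))
    (hd.le_apply_iff_lt_card hB hBc)

end AntitoneSequence

namespace SimpleGraph

variable {V : Type*} {G : SimpleGraph V} [DecidableRel G.Adj]

theorem degree_eq_card_filter_adj_add_card_filter_adj_compl [Fintype V] [DecidableEq V]
    (S : Finset V) (v : V) : G.degree v = #(S.filter (G.Adj v)) + #(Sᶜ.filter (G.Adj v)) := by
  rw [← card_neighborFinset_eq_degree, neighborFinset_eq_filter, ← card_union_of_disjoint
    (disjoint_filter_filter disjoint_compl_right), ← filter_union, union_compl]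

theorem sum_card_filter_adj_comm (S T : Finset V) :
    ∑ v ∈ S, #(T.filter (G.Adj v)) = ∑ w ∈ T, #(S.filter (G.Adj w)) := by
  simpa only [bipartiteAbove, bipartiteBelow, G.adj_comm _] using
    sum_card_bipartiteAbove_eq_sum_card_bipartiteBelow (s := S) (t := T) (r := G.Adj)

variable [DecidableEq V]

theorem filter_adj_subset_erase (S : Finset V) (v : V) : S.filter (G.Adj v) ⊆ S.erase v :=
  fun _ hw => mem_erase.mpr ⟨(G.ne_of_adj (mem_filter.mp hw).2).symm, (mem_filter.mp hw).1⟩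

theorem card_filter_adj_le {S : Finset V} {v : V} (hv : v ∈ S) :
    #(S.filter (G.Adj v)) ≤ #S - 1 :=
  card_erase_of_mem hv ▸ card_le_card (filter_adj_subset_erase S v)

theorem isClique_iff_forall_card_filter_adj {S : Finset V} :
    G.IsClique (S : Set V) ↔ ∀ v ∈ S, #(S.filter (G.Adj v)) = #S - 1 := by
  refine ⟨fun hS v hv => ?_, fun h v hv w hw hvw => ?_⟩
  · rw [← card_erase_of_mem hv]
    refine congrArg card ((filter_adj_subset_erase S v).antisymm fun w hw => ?_)
    obtain ⟨hwv, hwS⟩ := mem_erase.mp hw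
    exact mem_filter.mpr ⟨hwS, hS hv hwS hwv.symm⟩
  · have hfilter : S.filter (G.Adj v) = S.erase v :=
      eq_of_subset_of_card_le (filter_adj_subset_erase S v)
        (by rw [card_erase_of_mem hv, h v hv])
    have hw' : w ∈ S.filter (G.Adj v) := hfilter ▸ mem_erase.mpr ⟨Ne.symm hvw, hw⟩
    exact (mem_filter.mp hw').2

theorem isClique_iff_sum_card_filter_adj {S : Finset V} :
    G.IsClique (S : Set V) ↔ ∑ v ∈ S, #(S.filter (G.Adj v)) = #S * (#S - 1) := by
  rw [isClique_iff_forall_card_filter_adj, ← smul_eq_mul, ← sum_const,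
    sum_eq_sum_iff_of_le fun v hv => card_filter_adj_le hv]

theorem IsClique.card_le_degree_add_one [Fintype V] {S : Finset V} (hS : G.IsClique (S : Set V))
    {v : V} (hv : v ∈ S) : #S ≤ G.degree v + 1 := by
  rw [degree_eq_card_filter_adj_add_card_filter_adj_compl S,
    isClique_iff_forall_card_filter_adj.mp hS v hv]
  have := card_pos.mpr ⟨v, hv⟩
  omega

end SimpleGraph

theorem deg_eq_degree {V : Type*} (G : SimpleGraph V) [Fintype V] [DecidableRel G.Adj] (v : V) :
    deg G v = G.degree v := by
  rw [deg, Set.ncard_eq_toFinset_card', ← card_neighborFinset_eq_degree, neighborFinset_def]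

section SplitGraph

variable {V : Type*} {G : SimpleGraph V}

theorem isIndepSet_iff_sum_card_filter_adj [DecidableRel G.Adj] {T : Finset V} :
    _root_.IsIndepSet G (T : Set V) ↔ ∑ v ∈ T, #(T.filter (G.Adj v)) = 0 := by
  simp only [sum_eq_zero_iff, card_eq_zero, filter_eq_empty_iff, _root_.IsIndepSet]
  exact ⟨fun h v hv w hw hvw => h hv hw (G.ne_of_adj hvw) hvw, fun h v hv w hw _ => h v hv hw⟩

variable [Fintype V] [DecidableEq V]

theorem isClique_and_isIndepSet_compl_iff [DecidableRel G.Adj] (S : Finset V) :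
    G.IsClique (S : Set V) ∧ _root_.IsIndepSet G (Sᶜ : Finset V) ↔
      ∑ v ∈ S, G.degree v = #S * (#S - 1) + ∑ v ∈ Sᶜ, G.degree v := by
  simp only [degree_eq_card_filter_adj_add_card_filter_adj_compl S, sum_add_distrib]
  rw [isClique_iff_sum_card_filter_adj, isIndepSet_iff_sum_card_filter_adj,
    sum_card_filter_adj_comm S Sᶜ]
  have := sum_le_sum fun v (hv : v ∈ S) => card_filter_adj_le (G := G) hv
  rw [sum_const, smul_eq_mul] at this
  omega

theorem isSplitGraph_iff_exists_finset :
    IsSplitGraph G ↔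
      ∃ S : Finset V, G.IsClique (S : Set V) ∧ _root_.IsIndepSet G (Sᶜ : Finset V) := by
  refine ⟨fun ⟨A, B, hA, hB, hAB, hdisj⟩ => ⟨B.toFinite.toFinset, ?_⟩, fun ⟨S, hS, hSc⟩ => ?_⟩
  · have hAB : A = Bᶜ := IsCompl.eq_compl ⟨hdisj, codisjoint_iff.mpr hAB⟩
    simpa [hAB] using And.intro hB hA
  · exact ⟨_, _, hSc, hS, by simp, by simpa using disjoint_compl_left⟩

theorem IsSplitGraph.exists_finset_degree_lt [DecidableRel G.Adj] (hG : IsSplitGraph G) :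
    ∃ B : Finset V, G.IsClique (B : Set V) ∧ _root_.IsIndepSet G (Bᶜ : Finset V) ∧
      ∀ v ∉ B, G.degree v < #B := by
  classical
  obtain ⟨B, hBmem, hBmax⟩ := exists_max_image
    (univ.filter fun B : Finset V => G.IsClique (B : Set V) ∧ _root_.IsIndepSet G (Bᶜ : Finset V))
    card ((isSplitGraph_iff_exists_finset.mp hG).imp fun S hS => mem_filter.mpr ⟨mem_univ _, hS⟩)
  obtain ⟨hB, hBc⟩ := (mem_filter.mp hBmem).2
  refine ⟨B, hB, hBc, fun v hv => ?_⟩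
  by_contra! hle
  have hN : G.neighborFinset v = B := by
    refine eq_of_subset_of_card_le (fun w hw => ?_) (by rwa [card_neighborFinset_eq_degree])
    by_contra hwB
    have hvw := (mem_neighborFinset G v w).mp hw
    exact hBc (by simpa using hv) (by simpa using hwB) (G.ne_of_adj hvw) hvw
  have hinsert :
      G.IsClique (insert v B : Set V) ∧ _root_.IsIndepSet G ((insert v B)ᶜ : Finset V) :=
    ⟨hB.insert fun b hb _ => (mem_neighborFinset G v b).mp (hN ▸ hb), hBc.mono (by simp)⟩
  have := hBmax (insert v B) (mem_filter.mpr ⟨mem_univ _, by simpa using hinsert⟩)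
  rw [card_insert_of_notMem hv] at this
  omega

end SplitGraph

theorem isSplitGraph_iff_sum_degree_eq {n : ℕ} (G : SimpleGraph (Fin n)) [DecidableRel G.Adj]
    (hanti : Antitone fun v => G.degree v) :
    IsSplitGraph G ↔
      ∑ v ∈ univ.filter (fun v : Fin n => (v : ℕ) < splitIndex fun v => G.degree v), G.degree v =
        splitIndex (fun v => G.degree v) * (splitIndex (fun v => G.degree v) - 1) +
          ∑ v ∈ (univ.filter fun v : Fin n => (v : ℕ) < splitIndex fun v => G.degree v)ᶜ,
            G.degree v := by
  set m := splitIndex fun v => G.degree v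
  set S := univ.filter fun v : Fin n => (v : ℕ) < m
  have hS : #S = m := Fin.card_filter_val_lt_of_le (splitIndex_le _)
  rw [← hS]
  refine ⟨fun hG => ?_, fun h => isSplitGraph_iff_exists_finset.mpr
    ⟨S, (isClique_and_isIndepSet_compl_iff S).mpr h⟩⟩
  obtain ⟨B, hB, hBc, hlt⟩ := hG.exists_finset_degree_lt
  have hBdeg (v : Fin n) (hv : v ∈ B) : #B ≤ G.degree v + 1 := hB.card_le_degree_add_one hv
  have hm : m = #B := hanti.splitIndex_eq_card hBdeg hlt
  have hsum : ∑ v ∈ S, G.degree v = ∑ v ∈ B, G.degree v := by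
    simp only [S, hm]
    refine hanti.sum_filter_val_lt_card_eq fun x hx y hy => ?_
    have := hlt x hx
    have := hBdeg y hy
    omega
  have hsumc := sum_add_sum_compl S fun v => G.degree v
  rw [← sum_add_sum_compl B, hsum] at hsumc
  have := (isClique_and_isIndepSet_compl_iff B).mp ⟨hB, hBc⟩
  rw [hsum, hS, hm]
  omega

/-- Hammer–Simeone / Tyshkevich et al.: a graph is split iff its
nonincreasing degree sequence satisfies
`Σ_{i=1}^m d_i = m(m−1) + Σ_{i=m+1}^n d_i` where `m = m(d) = max{i : d_i ≥ i−1}`.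
Here the 1-based term `d_i` is `d ⟨i-1⟩`, and `m` is expressed accordingly. -/
theorem stmt9 (n : ℕ) (G : SimpleGraph (Fin n)) (d : Fin n → ℕ) (hanti : Antitone d)
    (hdeg : ∀ i, deg G i = d i) :
    IsSplitGraph G ↔
      ∑ i ∈ Finset.univ.filter (fun i : Fin n =>
          (i : ℕ) < (Finset.univ.filter (fun j : Fin n => (j : ℕ) ≤ d j)).sup
            (fun j : Fin n => (j : ℕ) + 1)), d i =
        ((Finset.univ.filter (fun j : Fin n => (j : ℕ) ≤ d j)).sup
            (fun j : Fin n => (j : ℕ) + 1)) *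
          (((Finset.univ.filter (fun j : Fin n => (j : ℕ) ≤ d j)).sup
            (fun j : Fin n => (j : ℕ) + 1)) - 1) +
        ∑ i ∈ Finset.univ.filter (fun i : Fin n =>
          ¬ (i : ℕ) < (Finset.univ.filter (fun j : Fin n => (j : ℕ) ≤ d j)).sup
            (fun j : Fin n => (j : ℕ) + 1)), d i := by
  classical
  obtain rfl : d = fun v => G.degree v := funext fun v => (hdeg v).symm.trans (deg_eq_degree G v)
  rw [← compl_filter]
  exact isSplitGraph_iff_sum_degree_eq G hanti
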